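/- arXiv:1803.10557 — 2 statements merged into one kernel-verified Lean document; each statement's English description precedes it below -/
import Mathlib

section
/- Let P = [p₁, ..., p_m] be an invertible m×m matrix whose columns p_j satisfy A(λ_j)p_j = 0 for complex numbers λ₁, ..., λ_m, and let Λ = diag(λ₁, ..., λ_m). Then R = PΛP^{-1} is a right solvent of the monic matrix polynomial A(λ), i.e., R^l + A₁R^{l-1} + ... + A_l = 0. -/
/-- `R = P Λ P⁻¹` built from independent right latent vectors is a right solvent. -/
theorem latent_vectors_give_right_solvent (m l : ℕ) (A : ℕ → Matrix (Fin m) (Fin m) ℂ)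
    (hA0 : A 0 = 1) (P : Matrix (Fin m) (Fin m) ℂ) (hP : IsUnit P.det)
    (lam : Fin m → ℂ)
    (hcol : ∀ j, (∑ i ∈ Finset.range (l + 1), (lam j) ^ (l - i) • A i).mulVec
      (fun a => P a j) = 0) :
    (∑ i ∈ Finset.range (l + 1),
      A i * (P * Matrix.diagonal lam * P⁻¹) ^ (l - i)) = 0 := by
  have hPP : P * P⁻¹ = 1 := Matrix.mul_nonsing_inv P hP
  have hconj : ∀ k : ℕ, (P * Matrix.diagonal lam * P⁻¹) ^ k
      = P * (Matrix.diagonal lam) ^ k * P⁻¹ := by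
    intro k
    induction k with
    | zero => simp [hPP]
    | succ n ih =>
        rw [pow_succ, ih, pow_succ]
        have : P⁻¹ * (P * Matrix.diagonal lam * P⁻¹)
            = Matrix.diagonal lam * P⁻¹ := by
          rw [← Matrix.mul_assoc, ← Matrix.mul_assoc,
            Matrix.nonsing_inv_mul P hP, Matrix.one_mul]
        rw [Matrix.mul_assoc (P * Matrix.diagonal lam ^ n), this,
          ← Matrix.mul_assoc, ← Matrix.mul_assoc]
  have key : (∑ i ∈ Finset.range (l + 1),
      A i * P * (Matrix.diagonal lam) ^ (l - i)) = 0 := by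
    ext a j
    have h := congrFun (hcol j) a
    simp only [Matrix.mulVec, dotProduct, Finset.sum_apply,
      Matrix.sum_apply, Matrix.smul_apply, Pi.zero_apply, smul_eq_mul,
      Finset.sum_mul] at h
    rw [Finset.sum_comm] at h
    simp only [Matrix.sum_apply, Matrix.zero_apply]
    rw [← h]
    refine Finset.sum_congr rfl fun i _ => ?_
    rw [Matrix.diagonal_pow, Matrix.mul_diagonal, Matrix.mul_apply, Finset.sum_mul]
    exact Finset.sum_congr rfl fun b _ => by rw [Pi.pow_apply]; ring
  calc (∑ i ∈ Finset.range (l + 1), A i * (P * Matrix.diagonal lam * P⁻¹) ^ (l - i))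
      = (∑ i ∈ Finset.range (l + 1), A i * P * (Matrix.diagonal lam) ^ (l - i)) * P⁻¹ := by
        rw [Finset.sum_mul]
        exact Finset.sum_congr rfl fun i _ => by
          rw [hconj, ← Matrix.mul_assoc, ← Matrix.mul_assoc]
    _ = 0 := by rw [key, Matrix.zero_mul]
end

section
/- Let R₁, R₂ be right solvents of the monic quadratic matrix polynomial A(λ) = λ²I + A₁λ + A₂ with R₂ - R₁ invertible. Then Q := -(A₁ + R₁) satisfies (λI - Q)(λI - R₁) = A(λ) and Q = (R₂ - R₁) R₂ (R₂ - R₁)^{-1}. -/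
open Polynomial

/-- Auxiliary: factorization of a monic quadratic over a (noncommutative) ring. -/
theorem aux_quadratic_factor {R : Type*} [Ring R] (Q S : R) :
    ((X : R[X]) - C Q) * (X - C S) = X ^ 2 - (C Q + C S) * X + C (Q * S) := by
  have hx : (X : R[X]) * C S = C S * X := X_mul_C S
  calc ((X : R[X]) - C Q) * (X - C S)
      = X * X - X * C S - (C Q * X - C Q * C S) := by rw [sub_mul, mul_sub, mul_sub]
    _ = X ^ 2 - (C S * X + C Q * X) + C (Q * S) := by rw [hx, ← C_mul, ← sq]; abel
    _ = X ^ 2 - (C Q + C S) * X + C (Q * S) := by rw [add_mul]; abel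

/-- For two right solvents `R₁, R₂` of a monic quadratic matrix polynomial with `R₂ - R₁`
invertible, `Q = -(A₁ + R₁)` is the left spectral factor and
`Q = (R₂ - R₁) R₂ (R₂ - R₁)⁻¹`. -/
theorem quadratic_two_solvents_factorization (m : ℕ)
    (A1 A2 R1 R2 : Matrix (Fin m) (Fin m) ℂ)
    (h1 : R1 ^ 2 + A1 * R1 + A2 = 0) (h2 : R2 ^ 2 + A1 * R2 + A2 = 0)
    (hd : IsUnit (R2 - R1).det) :
    ((X : Polynomial (Matrix (Fin m) (Fin m) ℂ)) - C (-(A1 + R1))) * (X - C R1) =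
        X ^ 2 + C A1 * X + C A2 ∧
      -(A1 + R1) = (R2 - R1) * R2 * (R2 - R1)⁻¹ := by
  have hA2 : A2 = -(R1 ^ 2 + A1 * R1) := eq_neg_of_add_eq_zero_right h1
  constructor
  · rw [aux_quadratic_factor]
    have e1 : -(A1 + R1) * R1 = A2 := by
      rw [hA2, neg_mul, add_mul, sq]; abel
    have e2 : -(C (-(A1 + R1)) + C R1) = (C A1 : Polynomial (Matrix (Fin m) (Fin m) ℂ)) := by
      rw [← C_add, ← C_neg]
      congr 1
      abel
    rw [e1, sub_eq_add_neg, ← neg_mul, e2]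
  · have h3 : R2 ^ 2 + A1 * R2 = R1 ^ 2 + A1 * R1 :=
      add_right_cancel (h2.trans h1.symm)
    have key : -(A1 + R1) * (R2 - R1) = (R2 - R1) * R2 := by
      have hA1d : A1 * (R2 - R1) = R1 ^ 2 - R2 ^ 2 := by
        rw [mul_sub]
        have : A1 * R2 = R1 ^ 2 + A1 * R1 - R2 ^ 2 := by rw [← h3]; abel
        rw [this]; abel
      rw [neg_mul, add_mul, hA1d, mul_sub, sub_mul, sq, sq]
      abel
    calc -(A1 + R1) = -(A1 + R1) * (R2 - R1) * (R2 - R1)⁻¹ :=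
          (Matrix.mul_nonsing_inv_cancel_right _ _ hd).symm
      _ = (R2 - R1) * R2 * (R2 - R1)⁻¹ := by rw [key]
end
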